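/- arXiv:math/0611155 — 3 statements merged into one kernel-verified Lean document; each statement's English description precedes it below -/
import Mathlib

section
/- If 0 < d < 1 and p = 1/⌈d^{-2}⌉ and q = 1 - e^{-d²}, then |p - q| ≤ (3/2) d⁴. -/
theorem ceil_coupling_bound (d : ℝ) (hd0 : 0 < d) (hd1 : d < 1)
    (p q : ℝ) (hp : p = 1 / (⌈d ^ (-2 : ℤ)⌉ : ℝ)) (hq : q = 1 - Real.exp (-d ^ 2)) :
    |p - q| ≤ (3 / 2) * d ^ 4 := by
  subst hp hq
  set x := d ^ 2 with hxdef
  have hx0 : 0 < x := by positivity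
  have hx1 : x < 1 := by
    have : d ^ 2 < 1 ^ 2 := by nlinarith
    simpa [hxdef] using this
  have hrw : d ^ (-2 : ℤ) = x⁻¹ := by
    rw [hxdef, zpow_neg]
    norm_cast
  rw [hrw]
  have hm_lb : x⁻¹ ≤ (⌈x⁻¹⌉ : ℝ) := Int.le_ceil _
  have hm_ub : (⌈x⁻¹⌉ : ℝ) < x⁻¹ + 1 := Int.ceil_lt_add_one _
  have hmpos : (0:ℝ) < (⌈x⁻¹⌉ : ℝ) := lt_of_lt_of_le (by positivity) hm_lb
  set m := ((⌈x⁻¹⌉ : ℤ) : ℝ) with hm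
  have hp1 : 1 / m ≤ x := by
    rw [div_le_iff₀ hmpos]
    calc (1:ℝ) = x * x⁻¹ := by field_simp
    _ ≤ x * m := by nlinarith
  have hp2 : x - x ^ 2 < 1 / m := by
    have h1 : 1 / m > 1 / (x⁻¹ + 1) := by
      apply one_div_lt_one_div_of_lt hmpos hm_ub
    have h2 : 1 / (x⁻¹ + 1) = x / (1 + x) := by
      field_simp
    have h3 : x - x ^ 2 ≤ x / (1 + x) := by
      rw [le_div_iff₀ (by linarith)]
      nlinarith
    linarith [h2 ▸ h1]
  have habs : |Real.exp (-x) - 1 - (-x)| ≤ x ^ 2 := by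
    have := Real.abs_exp_sub_one_sub_id_le (x := -x) (by rw [abs_neg, abs_of_pos hx0]; linarith)
    simpa [neg_neg] using this
  rw [abs_le] at habs
  have hx4 : d ^ 4 = x ^ 2 := by rw [hxdef]; ring
  rw [hx4, abs_le]
  constructor <;> nlinarith [habs.1, habs.2, Real.add_one_le_exp (-x)]
end

section
/- If 0 < d and d^{-2} ≥ 2, and p = 1/⌊d^{-2}⌋ and q = 1 - e^{-d²}, then |p - q| ≤ (5/2) d⁴. -/
theorem floor_coupling_bound (d : ℝ) (hd0 : 0 < d) (hd2 : (2 : ℝ) ≤ d ^ (-2 : ℤ))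
    (p q : ℝ) (hp : p = 1 / (⌊d ^ (-2 : ℤ)⌋ : ℝ)) (hq : q = 1 - Real.exp (-d ^ 2)) :
    |p - q| ≤ (5 / 2) * d ^ 4 := by
  have hx0 : (0 : ℝ) < d ^ 2 := by positivity
  have hzp : d ^ (-2 : ℤ) = (d ^ 2)⁻¹ := by
    rw [zpow_neg]
    norm_cast
  set x := d ^ 2 with hxdef
  rw [hzp] at hd2 hp
  have hinvx : x⁻¹ * x = 1 := inv_mul_cancel₀ hx0.ne'
  have hxhalf : x ≤ 1 / 2 := by nlinarith
  -- floor facts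
  set M : ℝ := (⌊x⁻¹⌋ : ℝ) with hMdef
  have hMle : M ≤ x⁻¹ := Int.floor_le _
  have hMgt : x⁻¹ - 1 < M := Int.sub_one_lt_floor _
  have hM2 : (2 : ℝ) ≤ M := by
    have h : (2 : ℤ) ≤ ⌊x⁻¹⌋ := Int.le_floor.mpr (by exact_mod_cast hd2)
    rw [hMdef]
    exact_mod_cast h
  have hMpos : (0 : ℝ) < M := by linarith
  have hMx1 : M * x ≤ 1 := by nlinarith
  have hxM1 : 1 - x < M * x := by nlinarith
  set P : ℝ := 1 / M with hPdef
  have hPpos : 0 < P := by positivity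
  have hMP : M * P = 1 := by
    rw [hPdef]
    field_simp
  have hPub : P * (1 - x) ≤ x := by nlinarith
  have hPlb : x ≤ P := by nlinarith
  -- exp facts
  set E : ℝ := Real.exp (-x) with hEdef
  have hEpos : 0 < E := Real.exp_pos _
  have hE1 : 1 - x ≤ E := by
    have := Real.add_one_le_exp (-x)
    linarith
  have hE2 : E * (1 + x + x ^ 2 / 2) ≤ 1 := by
    have hquad := Real.quadratic_le_exp_of_nonneg hx0.le
    have hEexp : E * Real.exp x = 1 := by
      rw [hEdef, ← Real.exp_add]
      simp
    nlinarith
  have hEub : E ≤ 1 - x + x ^ 2 / 2 := by nlinarith [sq_nonneg (x ^ 2), sq_nonneg x]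
  have hd4 : d ^ 4 = x ^ 2 := by rw [hxdef]; ring
  rw [hd4, hp, hq, abs_le]
  constructor
  · linarith [sq_nonneg x]
  · nlinarith [hPub, hEub, hxhalf, hPpos.le, hx0.le, mul_pos hPpos hx0]
end

section
/- Let 0 < p < 1/j and 0 < q < 1. Let V₁,…,V_j be {0,1}-valued random variables such that P(V_i = 0 for all i) = 1 - jp and, for each i, P(V_i = 1 and V_ℓ = 0 for all ℓ ≠ i) = p. Let W₁,…,W_j be independent {0,1}-valued random variables with P(W_i = 1) = q. Then there exists a coupling of (V₁,…,V_j) and (W₁,…,W_j) on a common probability space (preserving each marginal law) such that P(V_i = W_i for all i) ≥ 1 - j|p - q| - j(j-1)q². -/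
open MeasureTheory ProbabilityTheory
open scoped ENNReal

/-!
On a countable space, any two laws `ρ`, `σ` admit a coupling putting mass at least
`∑ₓ min (ρ {x}) (σ {x})` on the diagonal: the common part sits on the diagonal and the two
residuals, which have equal mass, are coupled independently. For the one-hot law of `V` and the
product Bernoulli law of `W`, the terms of this sum at the zero vector and at the `j` unit vectors
are `min (1 - j p) ((1 - q) ^ j)` and `min p (q (1 - q) ^ (j - 1))`, and Bernoulli's inequality
`(1 - q) ^ n ≥ 1 - n q` bounds them below by `1 - j |p - q| - j (j - 1) q ^ 2`.
-/

namespace MeasureTheory.Measure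

variable {S : Type*} [MeasurableSpace S]

lemma inv_measure_univ_mul_smul_self (ρ : Measure S) [IsFiniteMeasure ρ] :
    ((ρ Set.univ)⁻¹ * ρ Set.univ) • ρ = ρ := by
  rcases eq_zero_or_neZero ρ with rfl | _
  · simp
  · rw [ENNReal.inv_mul_cancel (NeZero.ne _) (measure_ne_top _ _), one_smul]

lemma sum_smul_dirac_add_sum_tsub_smul_dirac {f g : S → ℝ≥0∞} (hfg : f ≤ g) :
    sum (fun x => f x • dirac x) + sum (fun x => (g x - f x) • dirac x) =
      sum (fun x => g x • dirac x) := by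
  rw [sum_add_sum]
  congr with x : 1
  rw [← add_smul, add_tsub_cancel_of_le (hfg x)]

lemma exists_coupling_add_of_measure_univ_eq {m ρ' σ' : Measure S} [IsFiniteMeasure ρ']
    [IsFiniteMeasure σ'] (h : ρ' Set.univ = σ' Set.univ) :
    ∃ ν : Measure (S × S), ν.map Prod.fst = m + ρ' ∧ ν.map Prod.snd = m + σ' ∧
      m Set.univ ≤ ν {x | x.1 = x.2} := by
  have hdiag : Measurable fun x : S => (x, x) := by fun_prop
  -- If the residuals vanish, `(ρ' univ)⁻¹ = ∞`, but it multiplies the zero measure.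
  refine ⟨m.map (fun x => (x, x)) + (ρ' Set.univ)⁻¹ • ρ'.prod σ', ?_, ?_, ?_⟩
  · rw [Measure.map_add _ _ measurable_fst, map_map measurable_fst hdiag, Measure.map_smul,
      Measure.map_fst_prod, smul_smul, ← h, inv_measure_univ_mul_smul_self]
    exact congrArg (· + _) map_id
  · rw [Measure.map_add _ _ measurable_snd, map_map measurable_snd hdiag, Measure.map_smul,
      Measure.map_snd_prod, smul_smul, h, inv_measure_univ_mul_smul_self]
    exact congrArg (· + _) map_id
  · calc m Set.univ = m ((fun x => (x, x)) ⁻¹' {x : S × S | x.1 = x.2}) := by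
          congr; ext; simp
      _ ≤ m.map (fun x => (x, x)) {x | x.1 = x.2} := le_map_apply hdiag.aemeasurable _
      _ ≤ _ := by rw [add_apply]; exact le_self_add

theorem exists_coupling_tsum_min_le [MeasurableSingletonClass S] [Countable S]
    (ρ σ : Measure S) [IsProbabilityMeasure ρ] [IsProbabilityMeasure σ] :
    ∃ ν : Measure (S × S), IsProbabilityMeasure ν ∧ ν.map Prod.fst = ρ ∧ ν.map Prod.snd = σ ∧
      ∑' x, min (ρ {x}) (σ {x}) ≤ ν {x | x.1 = x.2} := by
  set f : S → ℝ≥0∞ := fun x => min (ρ {x}) (σ {x})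
  set m := sum fun x => f x • dirac x
  set ρ' := sum fun x => (ρ {x} - f x) • dirac x
  set σ' := sum fun x => (σ {x} - f x) • dirac x
  have hρ : m + ρ' = ρ :=
    (sum_smul_dirac_add_sum_tsub_smul_dirac fun _ => min_le_left _ _).trans ρ.sum_smul_dirac
  have hσ : m + σ' = σ :=
    (sum_smul_dirac_add_sum_tsub_smul_dirac fun _ => min_le_right _ _).trans σ.sum_smul_dirac
  have : IsFiniteMeasure ρ' := isFiniteMeasure_of_le ρ (hρ ▸ Measure.le_add_left le_rfl)
  have : IsFiniteMeasure σ' := isFiniteMeasure_of_le σ (hσ ▸ Measure.le_add_left le_rfl)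
  have hm : m Set.univ ≠ ∞ :=
    ne_top_of_le_ne_top (measure_ne_top ρ Set.univ) (hρ ▸ le_add_right le_rfl)
  have hmass : m Set.univ + ρ' Set.univ = m Set.univ + σ' Set.univ := by
    rw [← add_apply, ← add_apply, hρ, hσ, measure_univ, measure_univ]
  obtain ⟨ν, hfst, hsnd, hdiag⟩ :=
    exists_coupling_add_of_measure_univ_eq ((ENNReal.add_right_inj hm).1 hmass)
  refine ⟨ν, ⟨?_⟩, hfst.trans hρ, hsnd.trans hσ, by simpa [m] using hdiag⟩
  rw [← Set.preimage_univ (f := Prod.fst), ← map_apply measurable_fst .univ, hfst, hρ,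
    measure_univ]

lemma sum_min_measureReal_le_of_tsum_le {T ι : Type*} [MeasurableSpace T] [Fintype ι]
    {ρ σ : Measure S} [IsFiniteMeasure ρ] [IsFiniteMeasure σ] {ν : Measure T} [IsFiniteMeasure ν]
    {s : Set T} {e : ι → S} (he : Function.Injective e) (h : ∑' x, min (ρ {x}) (σ {x}) ≤ ν s) :
    ∑ i, min (ρ.real {e i}) (σ.real {e i}) ≤ ν.real s := by
  calc ∑ i, min (ρ.real {e i}) (σ.real {e i}) = (∑ i, min (ρ {e i}) (σ {e i})).toReal := by
        rw [ENNReal.toReal_sum fun i _ =>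
          ne_top_of_le_ne_top (measure_ne_top ρ _) (min_le_left _ _)]
        simp [measureReal_def, ENNReal.toReal_min]
    _ ≤ ν.real s := ENNReal.toReal_mono (measure_ne_top _ _) <| by
        rw [← tsum_fintype (L := .unconditional _)]
        exact (ENNReal.tsum_comp_le_tsum_of_injective he _).trans h

variable {Ω ι β : Type*} [MeasurableSpace Ω] [MeasurableSpace β] [MeasurableSingletonClass β]
  [Countable ι] {μ : Measure Ω} {f : ι → Ω → β}

lemma map_pi_singleton (hf : ∀ i, Measurable (f i)) (w : ι → β) :
    μ.map (fun ω i => f i ω) {w} = μ {ω | ∀ i, f i ω = w i} := by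
  rw [map_apply (measurable_pi_lambda _ hf) (measurableSet_singleton w)]
  simp [Set.preimage, funext_iff]

lemma map_pi_singleton_single [DecidableEq ι] [Zero β] (hf : ∀ i, Measurable (f i)) (i : ι)
    (a : β) : μ.map (fun ω i => f i ω) {Pi.single i a} =
      μ {ω | f i ω = a ∧ ∀ l, l ≠ i → f l ω = 0} := by
  rw [map_pi_singleton hf]
  congr with ω
  exact funext_iff.symm.trans Function.eq_update_iff

end MeasureTheory.Measure

lemma Pi.injective_optionElim_zero_single {ι M : Type*} [DecidableEq ι] [Zero M] {a : M}
    (ha : a ≠ 0) : Function.Injective fun o : Option ι => o.elim (0 : ι → M) (Pi.single · a) := by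
  rintro (_ | i) (_ | i') h
  · rfl
  · simpa [ha.symm] using congrFun h i'
  · simpa [ha] using congrFun h i
  · simpa [Pi.single_apply, eq_comm, ha] using congrFun h i

namespace ProbabilityTheory

variable {Ω ι β : Type*} [MeasurableSpace Ω] {μ : Measure Ω}

lemma measureReal_preimage_zero_eq_one_sub [IsProbabilityMeasure μ] {X : Ω → ℕ}
    (hX : Measurable X) (hX01 : ∀ ω, X ω = 0 ∨ X ω = 1) :
    μ.real (X ⁻¹' {0}) = 1 - μ.real (X ⁻¹' {1}) := by
  have : X ⁻¹' {0} = (X ⁻¹' {1})ᶜ := by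
    ext ω; rcases hX01 ω with h | h <;> simp [h]
  rw [this, probReal_compl_eq_one_sub (hX (measurableSet_singleton 1))]

variable [Fintype ι] [MeasurableSpace β] [MeasurableSingletonClass β] {f : ι → Ω → β}

theorem iIndepFun.measureReal_map_fun_singleton (hf : ∀ i, Measurable (f i))
    (h : iIndepFun f μ) (w : ι → β) :
    (μ.map (fun ω i => f i ω)).real {w} = ∏ i, μ.real (f i ⁻¹' {w i}) := by
  have := h.isProbabilityMeasure
  rw [h.map_fun_eq_pi_map fun i => (hf i).aemeasurable, measureReal_def, Measure.pi_singleton,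
    ENNReal.toReal_prod]
  exact Finset.prod_congr rfl fun i _ => by
    rw [Measure.map_apply (hf i) (measurableSet_singleton _), measureReal_def]

variable [Zero β] {a : ℝ}

theorem iIndepFun.measureReal_map_fun_zero (hf : ∀ i, Measurable (f i)) (h : iIndepFun f μ)
    (h0 : ∀ i, μ.real (f i ⁻¹' {0}) = a) :
    (μ.map (fun ω i => f i ω)).real {0} = a ^ Fintype.card ι := by
  simp [h.measureReal_map_fun_singleton hf, h0]

theorem iIndepFun.measureReal_map_fun_single [DecidableEq ι] (hf : ∀ i, Measurable (f i))
    (h : iIndepFun f μ) (h0 : ∀ i, μ.real (f i ⁻¹' {0}) = a) (i : ι) (x : β) :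
    (μ.map (fun ω i => f i ω)).real {Pi.single i x} =
      μ.real (f i ⁻¹' {x}) * a ^ (Fintype.card ι - 1) := by
  rw [h.measureReal_map_fun_singleton hf, Fintype.prod_eq_mul_prod_compl i, Pi.single_eq_same,
    Finset.prod_congr rfl fun l hl => by
      rw [Pi.single_eq_of_ne (Finset.mem_compl.1 hl ∘ Finset.mem_singleton.2), h0 l],
    Finset.prod_const, Finset.card_compl, Finset.card_singleton]

end ProbabilityTheory

lemma one_sub_abs_sub_sub_le_min_add_mul_min {j : ℕ} (hj : 1 ≤ j) (p : ℝ) {q : ℝ} (hq0 : 0 ≤ q)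
    (hq1 : q ≤ 1) :
    1 - j * |p - q| - j * ((j : ℝ) - 1) * q ^ 2 ≤
      min (1 - j * p) ((1 - q) ^ j) + j * min p (q * (1 - q) ^ (j - 1)) := by
  have bernoulli (n : ℕ) : 1 - n * q ≤ (1 - q) ^ n := by
    simpa [sub_eq_add_neg] using one_add_mul_le_pow (a := -q) (by linarith) n
  have hj' : (1 : ℝ) ≤ j := by exact_mod_cast hj
  have h0 : 1 - j * max p q ≤ min (1 - j * p) ((1 - q) ^ j) := by
    refine le_min ?_ ((bernoulli j).trans' ?_) <;> gcongr <;> simp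
  have h1 : min p q - ((j : ℝ) - 1) * q ^ 2 ≤ min p (q * (1 - q) ^ (j - 1)) := by
    have := mul_le_mul_of_nonneg_left (bernoulli (j - 1)) hq0
    push_cast [hj] at this
    refine le_min ?_ ?_ <;> nlinarith [min_le_left p q, min_le_right p q]
  calc 1 - j * |p - q| - j * ((j : ℝ) - 1) * q ^ 2
      = (1 - j * max p q) + j * (min p q - ((j : ℝ) - 1) * q ^ 2) := by
        rw [← max_sub_min_eq_abs']; ring
    _ ≤ _ := by gcongr

theorem coupling_lemma_general
    {Ω Ω' : Type*} [MeasurableSpace Ω] [MeasurableSpace Ω']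
    (μ : Measure Ω) (μ' : Measure Ω') [IsProbabilityMeasure μ] [IsProbabilityMeasure μ']
    (j : ℕ) (hj : 1 ≤ j) (p q : ℝ) (hq0 : 0 < q) (hq1 : q < 1)
    (V : Fin j → Ω → ℕ) (hVmeas : ∀ i, Measurable (V i))
    (hV0 : (μ {ω | ∀ i, V i ω = 0}).toReal = 1 - j * p)
    (hV1 : ∀ i, (μ {ω | V i ω = 1 ∧ ∀ l, l ≠ i → V l ω = 0}).toReal = p)
    (W : Fin j → Ω' → ℕ) (hWmeas : ∀ i, Measurable (W i))
    (hWval : ∀ i ω, W i ω = 0 ∨ W i ω = 1)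
    (hWindep : iIndepFun W μ')
    (hW1 : ∀ i, (μ' {ω | W i ω = 1}).toReal = q) :
    ∃ ν : Measure ((Fin j → ℕ) × (Fin j → ℕ)), IsProbabilityMeasure ν ∧
      ν.map Prod.fst = μ.map (fun ω i => V i ω) ∧
      ν.map Prod.snd = μ'.map (fun ω i => W i ω) ∧
      (ν {x | ∀ i, x.1 i = x.2 i}).toReal ≥ 1 - j * |p - q| - j * (j - 1) * q ^ 2 := by
  set ρ := μ.map (fun ω i => V i ω) with hρ
  set σ := μ'.map (fun ω i => W i ω) with hσ
  have : IsProbabilityMeasure ρ :=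
    Measure.isProbabilityMeasure_map (measurable_pi_lambda _ hVmeas).aemeasurable
  have : IsProbabilityMeasure σ :=
    Measure.isProbabilityMeasure_map (measurable_pi_lambda _ hWmeas).aemeasurable
  obtain ⟨ν, hν, hfst, hsnd, hdiag⟩ := Measure.exists_coupling_tsum_min_le ρ σ
  refine ⟨ν, hν, hfst, hsnd, ?_⟩
  have hρ0 : ρ.real {0} = 1 - j * p := by
    simpa [hρ, measureReal_def, Measure.map_pi_singleton hVmeas] using hV0
  have hρe (i : Fin j) : ρ.real {Pi.single i 1} = p := by
    rw [hρ, measureReal_def, Measure.map_pi_singleton_single hVmeas, hV1]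
  have hW0 (i : Fin j) : μ'.real (W i ⁻¹' {0}) = 1 - q :=
    (measureReal_preimage_zero_eq_one_sub (hWmeas i) (hWval i)).trans (congrArg (1 - ·) (hW1 i))
  have hσ0 : σ.real {0} = (1 - q) ^ j := by
    rw [hσ, hWindep.measureReal_map_fun_zero hWmeas hW0, Fintype.card_fin]
  have hσe (i : Fin j) : σ.real {Pi.single i 1} = q * (1 - q) ^ (j - 1) := by
    rw [hσ, hWindep.measureReal_map_fun_single hWmeas hW0, Fintype.card_fin, ← hW1 i]
    rfl
  have hsum := Measure.sum_min_measureReal_le_of_tsum_le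
    (Pi.injective_optionElim_zero_single (M := ℕ) (ι := Fin j) one_ne_zero) hdiag
  rw [Fintype.sum_option] at hsum
  calc _ ≤ min (1 - j * p) ((1 - q) ^ j) + j * min p (q * (1 - q) ^ (j - 1)) :=
        one_sub_abs_sub_sub_le_min_add_mul_min hj p hq0.le hq1.le
    _ ≤ ν.real {x | x.1 = x.2} := by simpa [hρ0, hρe, hσ0, hσe] using hsum
    _ = _ := by simp [measureReal_def, funext_iff]

theorem coupling_lemma
    {Ω Ω' : Type*} [MeasurableSpace Ω] [MeasurableSpace Ω']
    (μ : Measure Ω) (μ' : Measure Ω') [IsProbabilityMeasure μ] [IsProbabilityMeasure μ']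
    (j : ℕ) (hj : 1 ≤ j) (p q : ℝ) (hp0 : 0 < p) (hp1 : p < 1 / j) (hq0 : 0 < q) (hq1 : q < 1)
    (V : Fin j → Ω → ℕ) (hVmeas : ∀ i, Measurable (V i))
    (hVval : ∀ i ω, V i ω = 0 ∨ V i ω = 1)
    (hV0 : (μ {ω | ∀ i, V i ω = 0}).toReal = 1 - j * p)
    (hV1 : ∀ i, (μ {ω | V i ω = 1 ∧ ∀ l, l ≠ i → V l ω = 0}).toReal = p)
    (W : Fin j → Ω' → ℕ) (hWmeas : ∀ i, Measurable (W i))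
    (hWval : ∀ i ω, W i ω = 0 ∨ W i ω = 1)
    (hWindep : iIndepFun W μ')
    (hW1 : ∀ i, (μ' {ω | W i ω = 1}).toReal = q) :
    ∃ ν : Measure ((Fin j → ℕ) × (Fin j → ℕ)), IsProbabilityMeasure ν ∧
      ν.map Prod.fst = μ.map (fun ω i => V i ω) ∧
      ν.map Prod.snd = μ'.map (fun ω i => W i ω) ∧
      (ν {x | ∀ i, x.1 i = x.2 i}).toReal ≥ 1 - j * |p - q| - j * (j - 1) * q ^ 2 :=
  coupling_lemma_general μ μ' j hj p q hq0 hq1 V hVmeas hV0 hV1 W hWmeas hWval hWindep hW1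
end
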